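/- Let γ>1 and v₋>0. There exist positive constants C and δ* (depending only on γ and v₋) such that for any 0<δ<δ* and any v,w>0 satisfying |p(w)−p(v₋)| ≤ δ and, in addition, either Q(v|w) < δ or |p(v)−p(w)| < δ, one has |p(v)−p(w)|² ≤ C·Q(v|w). -/

import Mathlib

/-- Pressure `p(v) = v^(-γ)`. -/
noncomputable def pres (γ v : ℝ) : ℝ := v ^ (-γ)

/-- `Q(v) = v^(1-γ)/(γ-1)`. -/
noncomputable def Qf (γ v : ℝ) : ℝ := v ^ (1 - γ) / (γ - 1)

/-- Relative functional `Q(v|w) = Q(v) - Q(w) - Q'(w)(v-w)` with `Q'(w) = -p(w)`. -/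
noncomputable def Qrel (γ v w : ℝ) : ℝ := Qf γ v - Qf γ w + pres γ w * (v - w)

/-!
Write `C = 2γ a^(-γ-1)`. For `v, w ≥ a` the function `F(y) = C·Q(y|w) - (p(y) - p(w))²`
vanishes at `y = w` and has derivative `(p(w) - p(y))(C - 2γ y^(-γ-1))`, whose second factor is
nonnegative on `[a, ∞)`; so `w` minimises `F` there and `(p(v) - p(w))² ≤ C·Q(v|w)`.
Choose `a` with `p(a) = (3/2) p(v₋)`. Then `|p(w) - p(v₋)| ≤ δ` keeps `w` above `a`, and either
alternative of the hypothesis keeps `v` above `a` once `δ` is small: `|p(v) - p(w)| < δ` directly,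
and `Q(v|w) < δ` because `Q(·|w)` decreases on `(0, w]` and `Q(a|w) ≥ (p(a) - p(w))²/C` is bounded
below.
-/

open Set

section DerivSign

variable {f f' : ℝ → ℝ}

lemma antitoneOn_of_hasDerivAt_nonpos {D : Set ℝ} (hD : Convex ℝ D)
    (hf : ∀ x ∈ D, HasDerivAt f (f' x) x) (hf' : ∀ x ∈ D, f' x ≤ 0) : AntitoneOn f D :=
  antitoneOn_of_hasDerivWithinAt_nonpos hD (fun x hx => (hf x hx).continuousAt.continuousWithinAt)
    (fun x hx => (hf x (interior_subset hx)).hasDerivWithinAt)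
    (fun x hx => hf' x (interior_subset hx))

lemma monotoneOn_of_hasDerivAt_nonneg {D : Set ℝ} (hD : Convex ℝ D)
    (hf : ∀ x ∈ D, HasDerivAt f (f' x) x) (hf' : ∀ x ∈ D, 0 ≤ f' x) : MonotoneOn f D :=
  monotoneOn_of_hasDerivWithinAt_nonneg hD (fun x hx => (hf x hx).continuousAt.continuousWithinAt)
    (fun x hx => (hf x (interior_subset hx)).hasDerivWithinAt)
    (fun x hx => hf' x (interior_subset hx))

lemma le_of_hasDerivAt_nonpos_of_nonneg {a w v : ℝ} (hf : ∀ x ∈ Ici a, HasDerivAt f (f' x) x)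
    (hleft : ∀ x ∈ Icc a w, f' x ≤ 0) (hright : ∀ x ∈ Ici w, 0 ≤ f' x)
    (haw : a ≤ w) (hav : a ≤ v) : f w ≤ f v := by
  rcases le_total v w with hvw | hwv
  · exact antitoneOn_of_hasDerivAt_nonpos (convex_Icc a w) (fun x hx => hf x hx.1) hleft
      ⟨hav, hvw⟩ ⟨haw, le_rfl⟩ hvw
  · exact monotoneOn_of_hasDerivAt_nonneg (convex_Ici w) (fun x hx => hf x (haw.trans hx)) hright
      self_mem_Ici hwv hwv

end DerivSign

section Pressure

variable {γ : ℝ}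

lemma pres_pos {v : ℝ} (hv : 0 < v) : 0 < pres γ v := Real.rpow_pos_of_pos hv _

lemma pres_lt_pres_iff (hγ : 0 < γ) {v w : ℝ} (hv : 0 < v) (hw : 0 < w) :
    pres γ v < pres γ w ↔ w < v :=
  Real.rpow_lt_rpow_iff_of_neg hv hw (neg_neg_of_pos hγ)

lemma pres_le_pres (hγ : 0 < γ) {v w : ℝ} (hv : 0 < v) (hvw : v ≤ w) : pres γ w ≤ pres γ v :=
  Real.rpow_le_rpow_of_nonpos hv hvw (neg_nonpos.mpr hγ.le)

lemma exists_pres_eq (hγ : γ ≠ 0) {y : ℝ} (hy : 0 < y) : ∃ a > 0, pres γ a = y :=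
  ⟨y ^ (-γ)⁻¹, Real.rpow_pos_of_pos hy _, Real.rpow_inv_rpow hy.le (neg_ne_zero.mpr hγ)⟩

lemma hasDerivAt_pres {v : ℝ} (hv : 0 < v) :
    HasDerivAt (pres γ) (-γ * v ^ (-γ - 1)) v :=
  Real.hasDerivAt_rpow_const (Or.inl hv.ne')

lemma hasDerivAt_Qf (hγ : γ ≠ 1) {v : ℝ} (hv : 0 < v) : HasDerivAt (Qf γ) (-pres γ v) v := by
  refine ((Real.hasDerivAt_rpow_const (p := 1 - γ) (Or.inl hv.ne')).div_const (γ - 1)).congr_deriv ?_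
  rw [show 1 - γ - 1 = -γ by ring, pres]
  field_simp [sub_ne_zero.mpr hγ]
  ring

lemma hasDerivAt_Qrel (hγ : γ ≠ 1) {v : ℝ} (hv : 0 < v) (w : ℝ) :
    HasDerivAt (Qrel γ · w) (pres γ w - pres γ v) v := by
  refine (((hasDerivAt_Qf hγ hv).sub_const (Qf γ w)).add
    (((hasDerivAt_id v).sub_const w).const_mul (pres γ w))).congr_deriv ?_
  simp only [mul_one]
  ring

@[simp]
lemma Qrel_self (γ w : ℝ) : Qrel γ w w = 0 := by simp [Qrel]

lemma Qrel_antitoneOn (hγ : 1 < γ) {v w : ℝ} (hv : 0 < v) :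
    AntitoneOn (Qrel γ · w) (Icc v w) :=
  antitoneOn_of_hasDerivAt_nonpos (convex_Icc v w)
    (fun x hx => hasDerivAt_Qrel hγ.ne' (hv.trans_le hx.1) w)
    (fun x hx => sub_nonpos.mpr (pres_le_pres (by linarith) (hv.trans_le hx.1) hx.2))

lemma sq_pres_sub_le_mul_Qrel (hγ : 1 < γ) {a v w : ℝ} (ha : 0 < a) (hav : a ≤ v) (haw : a ≤ w) :
    (pres γ v - pres γ w) ^ 2 ≤ 2 * γ * a ^ (-γ - 1) * Qrel γ v w := by
  set C := 2 * γ * a ^ (-γ - 1)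
  have hγ0 : 0 < γ := by linarith
  have hC : ∀ x ∈ Ici a, 0 ≤ C - 2 * γ * x ^ (-γ - 1) := fun x hx => by
    have := Real.rpow_le_rpow_of_nonpos ha hx (by linarith : -γ - 1 ≤ 0)
    nlinarith
  have hF : ∀ x ∈ Ici a, HasDerivAt (fun y => C * Qrel γ y w - (pres γ y - pres γ w) ^ 2)
      ((pres γ w - pres γ x) * (C - 2 * γ * x ^ (-γ - 1))) x := fun x hx => by
    have hx0 : 0 < x := ha.trans_le hx
    refine (((hasDerivAt_Qrel hγ.ne' hx0 w).const_mul C).sub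
      (((hasDerivAt_pres hx0).sub_const (pres γ w)).pow 2)).congr_deriv ?_
    push_cast
    ring
  have hmin := le_of_hasDerivAt_nonpos_of_nonneg hF
    (fun x hx => mul_nonpos_of_nonpos_of_nonneg
      (sub_nonpos.mpr (pres_le_pres hγ0 (ha.trans_le hx.1) hx.2)) (hC x hx.1))
    (fun x hx => mul_nonneg (sub_nonneg.mpr (pres_le_pres hγ0 (ha.trans_le haw) hx))
      (hC x (haw.trans hx)))
    haw hav
  simp only [Qrel_self, mul_zero, sub_self] at hmin
  linarith

lemma le_of_Qrel_lt (hγ : 1 < γ) {a v w : ℝ} (ha : 0 < a) (hv : 0 < v) (haw : a ≤ w)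
    (hQ : Qrel γ v w < (pres γ a - pres γ w) ^ 2 / (2 * γ * a ^ (-γ - 1))) : a ≤ v := by
  by_contra! hva
  have hC : 0 < 2 * γ * a ^ (-γ - 1) := by
    have := Real.rpow_pos_of_pos ha (-γ - 1)
    positivity
  have hQa : Qrel γ a w ≤ Qrel γ v w :=
    Qrel_antitoneOn hγ hv ⟨le_rfl, hva.le.trans haw⟩ ⟨hva.le, haw⟩ hva.le
  rw [lt_div_iff₀ hC] at hQ
  nlinarith [sq_pres_sub_le_mul_Qrel hγ ha le_rfl haw]

end Pressure

theorem stmt8 (γ vm : ℝ) (hγ : 1 < γ) (hvm : 0 < vm) :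
    ∃ C > (0 : ℝ), ∃ δs > (0 : ℝ), ∀ δ : ℝ, 0 < δ → δ < δs → ∀ v w : ℝ, 0 < v → 0 < w →
      |pres γ w - pres γ vm| ≤ δ →
      (Qrel γ v w < δ ∨ |pres γ v - pres γ w| < δ) →
      |pres γ v - pres γ w| ^ 2 ≤ C * Qrel γ v w := by
  have hγ0 : 0 < γ := by linarith
  set ps := pres γ vm
  have hps : 0 < ps := pres_pos hvm
  obtain ⟨a, ha, hpa⟩ := exists_pres_eq hγ0.ne' (by positivity : 0 < 3 / 2 * ps)
  set C := 2 * γ * a ^ (-γ - 1)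
  have hC : 0 < C := by
    have := Real.rpow_pos_of_pos ha (-γ - 1)
    positivity
  refine ⟨C, hC, min (ps / 4) ((ps / 4) ^ 2 / C), by positivity, ?_⟩
  intro δ hδ hδs v w hv hw hpw hvw
  obtain ⟨hδ₁, hδ₂⟩ := lt_min_iff.mp hδs
  obtain ⟨hpw₁, hpw₂⟩ := abs_le.mp hpw
  have haw : a < w := (pres_lt_pres_iff hγ0 hw ha).mp (by linarith)
  have hav : a ≤ v := by
    rcases hvw with hQ | hp
    · refine le_of_Qrel_lt hγ ha hv haw.le (hQ.trans (hδ₂.trans_le ?_))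
      gcongr
      linarith
    · exact ((pres_lt_pres_iff hγ0 hv ha).mp (by linarith [(abs_lt.mp hp).2])).le
  rw [sq_abs]
  exact sq_pres_sub_le_mul_Qrel hγ ha hav haw.le
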